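/- Let d ≥ 1 be an integer and let b : ℝ^{2d} → ℝ be an admissible symbol. Define, for X ∈ ℝ^{2d} \ {0}, b_{d,0}(X) = |X|^{−2} and b_{d,j}(X) = ( (−1)^j (2j−1)!! ∏_{l=1}^{j} (d−2l) ) |X|^{−2−4j} for j ≥ 1. Then for every integer N ≥ 1 and every multi-index α ∈ ℕ^{2d} there exists a constant C_{α,N} such that |∂^α ( b(X) − Σ_{j=0}^{N−1} b_{d,j}(X) )| ≤ C_{α,N} |X|^{−2−4N−|α|} for all X ≠ 0. -/

import Mathlib

open MeasureTheory

noncomputable def pderiv1 {n : ℕ} (j : Fin n) (f : EuclideanSpace ℝ (Fin n) → ℝ) :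
    EuclideanSpace ℝ (Fin n) → ℝ :=
  fun x => fderiv ℝ f x (EuclideanSpace.single j 1)

noncomputable def mderiv {n : ℕ} (α : Fin n → ℕ) (f : EuclideanSpace ℝ (Fin n) → ℝ) :
    EuclideanSpace ℝ (Fin n) → ℝ :=
  (List.finRange n).foldr (fun j g => (pderiv1 j)^[α j] g) f

noncomputable def jb {n : ℕ} (X : EuclideanSpace ℝ (Fin n)) : ℝ :=
  Real.sqrt (1 + ‖X‖^2)

def IsAdmissibleSymbol (d : ℕ) (b : EuclideanSpace ℝ (Fin (2*d)) → ℝ) : Prop :=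
  ContDiff ℝ (⊤ : ℕ∞) b ∧
  (∀ α : Fin (2*d) → ℕ, ∃ C : ℝ, ∀ X, |mderiv α b X| ≤ C * jb X ^ (-(2:ℝ) - ∑ j, (α j : ℝ))) ∧
  (∀ X, ‖X‖^2 * b X - (1/4) * (∑ j, pderiv1 j (pderiv1 j b) X) = 1)


open scoped Nat

/-- The homogeneous terms `b_{d,j}` of the asymptotic expansion of the symbol. -/
noncomputable def bdj (d j : ℕ) (X : EuclideanSpace ℝ (Fin (2*d))) : ℝ :=
  if j = 0 then ‖X‖ ^ (-2 : ℤ)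
  else ((-1 : ℝ) ^ j * ((2*j - 1)‼ : ℝ) * ∏ l ∈ Finset.Icc 1 j, ((d : ℝ) - 2 * l)) *
    ‖X‖ ^ (-2 - 4 * (j : ℤ))

namespace Stmt15

variable {n : ℕ}

noncomputable def lderiv (L : List (Fin n)) (f : EuclideanSpace ℝ (Fin n) → ℝ) :
    EuclideanSpace ℝ (Fin n) → ℝ := L.foldr pderiv1 f

@[simp] lemma lderiv_nil (f : EuclideanSpace ℝ (Fin n) → ℝ) : lderiv [] f = f := rfl

@[simp] lemma lderiv_cons (j : Fin n) (L : List (Fin n)) (f : EuclideanSpace ℝ (Fin n) → ℝ) :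
    lderiv (j :: L) f = pderiv1 j (lderiv L f) := rfl

lemma lderiv_append (L L' : List (Fin n)) (f : EuclideanSpace ℝ (Fin n) → ℝ) :
    lderiv (L ++ L') f = lderiv L (lderiv L' f) := List.foldr_append

lemma lderiv_replicate (k : ℕ) (j : Fin n) (f : EuclideanSpace ℝ (Fin n) → ℝ) :
    lderiv (List.replicate k j) f = (pderiv1 j)^[k] f := by
  induction k with
  | zero => rfl
  | succ k ih => rw [List.replicate_succ, lderiv_cons, ih, Function.iterate_succ_apply']

/-- canonical list of a multi-index -/
def canonList (α : Fin n → ℕ) : List (Fin n) :=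
  (List.finRange n).flatMap (fun j => List.replicate (α j) j)

lemma mderiv_eq_lderiv (α : Fin n → ℕ) (f : EuclideanSpace ℝ (Fin n) → ℝ) :
    mderiv α f = lderiv (canonList α) f := by
  unfold mderiv canonList
  induction (List.finRange n) with
  | nil => rfl
  | cons j l ih =>
    rw [List.foldr_cons, ih, List.flatMap_cons, lderiv_append, lderiv_replicate]

lemma length_canonList (α : Fin n → ℕ) : (canonList α).length = ∑ j, α j := by
  unfold canonList
  rw [List.length_flatMap, Fin.sum_univ_def]
  simp [Function.comp_def]

lemma count_canonList (α : Fin n → ℕ) (a : Fin n) : (canonList α).count a = α a := by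
  unfold canonList
  rw [List.count_flatMap]
  simp only [Function.comp_def, List.count_replicate, beq_iff_eq]
  rw [← Fin.sum_univ_def]
  simp


variable {u : Set (EuclideanSpace ℝ (Fin n))} {f g : EuclideanSpace ℝ (Fin n) → ℝ}

lemma pderiv1_congrOn (hu : IsOpen u) (h : Set.EqOn f g u) (j : Fin n) :
    Set.EqOn (pderiv1 j f) (pderiv1 j g) u := by
  intro x hx
  unfold pderiv1
  rw [Filter.EventuallyEq.fderiv_eq (Filter.eventuallyEq_of_mem (hu.mem_nhds hx) h)]

lemma lderiv_congrOn (hu : IsOpen u) (h : Set.EqOn f g u) (L : List (Fin n)) :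
    Set.EqOn (lderiv L f) (lderiv L g) u := by
  induction L with
  | nil => exact h
  | cons j L ih => exact pderiv1_congrOn hu ih j

lemma contDiffOn_pderiv1 (hu : IsOpen u) (hf : ContDiffOn ℝ (⊤:ℕ∞) f u) (j : Fin n) :
    ContDiffOn ℝ (⊤:ℕ∞) (pderiv1 j f) u :=
  (hf.fderiv_of_isOpen hu (by exact_mod_cast le_refl _)).clm_apply contDiffOn_const

lemma contDiffOn_lderiv (hu : IsOpen u) (hf : ContDiffOn ℝ (⊤:ℕ∞) f u) (L : List (Fin n)) :
    ContDiffOn ℝ (⊤:ℕ∞) (lderiv L f) u := by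
  induction L with
  | nil => exact hf
  | cons j L ih => exact contDiffOn_pderiv1 hu ih j

lemma contDiff_pderiv1 (hf : ContDiff ℝ (⊤:ℕ∞) f) (j : Fin n) :
    ContDiff ℝ (⊤:ℕ∞) (pderiv1 j f) :=
  (hf.fderiv_right (by exact_mod_cast le_refl _)).clm_apply contDiff_const

lemma contDiff_lderiv (hf : ContDiff ℝ (⊤:ℕ∞) f) (L : List (Fin n)) :
    ContDiff ℝ (⊤:ℕ∞) (lderiv L f) := by
  induction L with
  | nil => exact hf
  | cons j L ih => exact contDiff_pderiv1 ih j


lemma wtop_add_one : ((⊤:ℕ∞) : WithTop ℕ∞) + 1 ≤ ((⊤:ℕ∞) : WithTop ℕ∞) := by exact_mod_cast le_top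
lemma wtop_one : ((⊤:ℕ∞) : WithTop ℕ∞) ≠ 0 := by simp
lemma wtop_two : (2 : WithTop ℕ∞) ≤ ((⊤:ℕ∞) : WithTop ℕ∞) := by
  have : (2 : WithTop ℕ∞) = ((2:ℕ∞) : WithTop ℕ∞) := by norm_cast
  rw [this]; exact_mod_cast le_top

lemma pderiv1_add_on (hu : IsOpen u) (hf : DifferentiableOn ℝ f u)
    (hg : DifferentiableOn ℝ g u) (j : Fin n) {x} (hx : x ∈ u) :
    pderiv1 j (fun y => f y + g y) x = pderiv1 j f x + pderiv1 j g x := by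
  unfold pderiv1
  rw [fderiv_fun_add (hf.differentiableAt (hu.mem_nhds hx)) (hg.differentiableAt (hu.mem_nhds hx))]
  rfl

lemma pderiv1_mul_on (hu : IsOpen u) (hf : DifferentiableOn ℝ f u)
    (hg : DifferentiableOn ℝ g u) (j : Fin n) {x} (hx : x ∈ u) :
    pderiv1 j (fun y => f y * g y) x = pderiv1 j f x * g x + f x * pderiv1 j g x := by
  unfold pderiv1
  rw [fderiv_fun_mul (hf.differentiableAt (hu.mem_nhds hx)) (hg.differentiableAt (hu.mem_nhds hx))]
  simp
  ring

lemma pderiv1_const_mul_on (hu : IsOpen u) (hf : DifferentiableOn ℝ f u) (c : ℝ)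
    (j : Fin n) {x} (hx : x ∈ u) :
    pderiv1 j (fun y => c * f y) x = c * pderiv1 j f x := by
  unfold pderiv1
  rw [fderiv_const_mul (hf.differentiableAt (hu.mem_nhds hx))]
  rfl

@[simp] lemma pderiv1_const (c : ℝ) (j : Fin n) :
    pderiv1 j (fun _ => c) = fun _ => 0 := by
  funext x; simp [pderiv1]

lemma lderiv_zero (L : List (Fin n)) : lderiv L (fun _ => (0:ℝ)) = fun _ => 0 := by
  induction L with
  | nil => rfl
  | cons j L ih => rw [lderiv_cons, ih]; exact pderiv1_const 0 j

lemma lderiv_add_on (hu : IsOpen u) (hf : ContDiffOn ℝ (⊤:ℕ∞) f u)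
    (hg : ContDiffOn ℝ (⊤:ℕ∞) g u) (L : List (Fin n)) :
    Set.EqOn (lderiv L (fun y => f y + g y)) (fun x => lderiv L f x + lderiv L g x) u := by
  induction L with
  | nil => intro x _; rfl
  | cons j L ih =>
    intro x hx
    rw [lderiv_cons, pderiv1_congrOn hu ih j hx, lderiv_cons, lderiv_cons]
    exact pderiv1_add_on hu ((contDiffOn_lderiv hu hf L).differentiableOn wtop_one)
      ((contDiffOn_lderiv hu hg L).differentiableOn wtop_one) j hx

lemma lderiv_const_mul_on (hu : IsOpen u) (hf : ContDiffOn ℝ (⊤:ℕ∞) f u) (c : ℝ)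
    (L : List (Fin n)) :
    Set.EqOn (lderiv L (fun y => c * f y)) (fun x => c * lderiv L f x) u := by
  induction L with
  | nil => intro x _; rfl
  | cons j L ih =>
    intro x hx
    rw [lderiv_cons, pderiv1_congrOn hu ih j hx, lderiv_cons]
    exact pderiv1_const_mul_on hu ((contDiffOn_lderiv hu hf L).differentiableOn wtop_one) c j hx

lemma lderiv_sum_on {ι : Type*} (hu : IsOpen u) (t : Finset ι)
    (F : ι → EuclideanSpace ℝ (Fin n) → ℝ) (hF : ∀ i ∈ t, ContDiffOn ℝ (⊤:ℕ∞) (F i) u)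
    (L : List (Fin n)) :
    Set.EqOn (lderiv L (fun y => ∑ i ∈ t, F i y)) (fun x => ∑ i ∈ t, lderiv L (F i) x) u := by
  classical
  induction t using Finset.induction with
  | empty =>
    intro x hx
    simp only [Finset.sum_empty]
    rw [lderiv_zero L]
  | @insert a s hnot ih =>
    intro x hx
    have hFs : ∀ i ∈ s, ContDiffOn ℝ (⊤:ℕ∞) (F i) u := fun i hi => hF i (Finset.mem_insert_of_mem hi)
    have hsum : ContDiffOn ℝ (⊤:ℕ∞) (fun y => ∑ i ∈ s, F i y) u := by
      exact ContDiffOn.sum fun i hi => hFs i hi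
    have h1 : Set.EqOn (lderiv L (fun y => ∑ i ∈ insert a s, F i y))
        (lderiv L (fun y => F a y + ∑ i ∈ s, F i y)) u := by
      apply lderiv_congrOn hu
      intro y _
      simp [Finset.sum_insert hnot]
    rw [h1 hx, lderiv_add_on hu (hF a (Finset.mem_insert_self a s)) hsum L hx]
    simp only [Finset.sum_insert hnot]
    rw [ih (fun i hi => hFs i hi) hx]

lemma pderiv1_comm (hf : ContDiff ℝ (⊤:ℕ∞) f) (i j : Fin n) :
    pderiv1 i (pderiv1 j f) = pderiv1 j (pderiv1 i f) := by
  funext x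
  have hdf : DifferentiableAt ℝ (fderiv ℝ f) x :=
    ((hf.fderiv_right wtop_add_one).differentiable wtop_one).differentiableAt
  have key : ∀ (a : Fin n) (w : EuclideanSpace ℝ (Fin n)),
      pderiv1 a (fun y => fderiv ℝ f y w) x
        = fderiv ℝ (fderiv ℝ f) x (EuclideanSpace.single a 1) w := by
    intro a w
    unfold pderiv1
    rw [fderiv_clm_apply hdf (differentiableAt_const w)]
    simp
  have hsymm := (hf.contDiffAt (x := x)).isSymmSndFDerivAt (by rw [minSmoothness_of_isRCLikeNormedField]; exact wtop_two)
  show pderiv1 i (fun y => fderiv ℝ f y (EuclideanSpace.single j 1)) x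
    = pderiv1 j (fun y => fderiv ℝ f y (EuclideanSpace.single i 1)) x
  rw [key i, key j]
  exact hsymm _ _

lemma lderiv_perm (hf : ContDiff ℝ (⊤:ℕ∞) f) {L L' : List (Fin n)} (h : L.Perm L') :
    lderiv L f = lderiv L' f := by
  induction h with
  | nil => rfl
  | cons x h ih => rw [lderiv_cons, lderiv_cons, ih]
  | swap i j L => rw [lderiv_cons, lderiv_cons, lderiv_cons, lderiv_cons,
      pderiv1_comm (contDiff_lderiv hf L) i j]
  | trans h1 h2 ih1 ih2 => rw [ih1, ih2]

end Stmt15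
namespace Stmt15
variable {n : ℕ}

/-- The symbol class: smooth away from zero with homogeneous-type bounds. -/
def PS (m : ℤ) (f : EuclideanSpace ℝ (Fin n) → ℝ) : Prop :=
  ContDiffOn ℝ (⊤:ℕ∞) f {X | X ≠ 0} ∧
  ∀ L : List (Fin n), ∃ C, 0 ≤ C ∧ ∀ X : EuclideanSpace ℝ (Fin n), X ≠ 0 →
    |lderiv L f X| ≤ C * ‖X‖ ^ (m - L.length)

lemma isOpenU : IsOpen {X : EuclideanSpace ℝ (Fin n) | X ≠ 0} := isOpen_compl_singleton

/-- graded bounds -/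
def Bnd (t : ℕ) (m : ℤ) (f : EuclideanSpace ℝ (Fin n) → ℝ) : Prop :=
  ∀ L : List (Fin n), L.length ≤ t → ∃ C, 0 ≤ C ∧ ∀ X : EuclideanSpace ℝ (Fin n), X ≠ 0 →
    |lderiv L f X| ≤ C * ‖X‖ ^ (m - L.length)

lemma bnd_pderiv1 {t : ℕ} {m : ℤ} {f : EuclideanSpace ℝ (Fin n) → ℝ} (h : Bnd (t+1) m f)
    (j : Fin n) : Bnd t (m-1) (pderiv1 j f) := by
  intro L hL
  obtain ⟨C, hC0, hC⟩ := h (L ++ [j]) (by simp; omega)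
  refine ⟨C, hC0, fun X hX => ?_⟩
  have h2 := hC X hX
  rw [lderiv_append] at h2
  have e : (m - 1) - (L.length : ℤ) = m - (((L ++ [j]).length : ℕ) : ℤ) := by
    simp; ring
  rw [e]
  exact h2

lemma bnd_mono {t t' : ℕ} {m : ℤ} {f : EuclideanSpace ℝ (Fin n) → ℝ} (h : Bnd t m f) (ht : t' ≤ t) : Bnd t' m f :=
  fun L hL => h L (hL.trans ht)

lemma bnd_mul : ∀ (t : ℕ) (m m' : ℤ) (f g : EuclideanSpace ℝ (Fin n) → ℝ),
    ContDiffOn ℝ (⊤:ℕ∞) f {X | X ≠ 0} → ContDiffOn ℝ (⊤:ℕ∞) g {X | X ≠ 0} →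
    Bnd t m f → Bnd t m' g → Bnd t (m + m') (fun X => f X * g X) := by
  intro t
  induction t with
  | zero =>
    intro m m' f g _ _ hf hg L hL
    obtain rfl : L = [] := List.eq_nil_of_length_eq_zero (Nat.le_zero.1 hL)
    obtain ⟨C, hC0, hC⟩ := hf [] (le_refl _)
    obtain ⟨C', hC'0, hC'⟩ := hg [] (le_refl _)
    refine ⟨C * C', mul_nonneg hC0 hC'0, fun X hX => ?_⟩
    have hn : ‖X‖ ≠ 0 := norm_ne_zero_iff.2 hX
    simp only [lderiv_nil, List.length_nil, Nat.cast_zero, sub_zero] at *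
    calc |f X * g X| = |f X| * |g X| := abs_mul _ _
      _ ≤ (C * ‖X‖ ^ m) * (C' * ‖X‖ ^ m') := by
          apply mul_le_mul (hC X hX) (hC' X hX) (abs_nonneg _)
          positivity
      _ = (C * C') * ‖X‖ ^ (m + m') := by rw [zpow_add₀ hn]; ring
  | succ t ih =>
    intro m m' f g hfs hgs hf hg L hL
    rcases List.eq_nil_or_concat L with rfl | ⟨L', j, rfl⟩
    · -- same as base case
      obtain ⟨C, hC0, hC⟩ := hf [] (by omega)
      obtain ⟨C', hC'0, hC'⟩ := hg [] (by omega)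
      refine ⟨C * C', mul_nonneg hC0 hC'0, fun X hX => ?_⟩
      have hn : ‖X‖ ≠ 0 := norm_ne_zero_iff.2 hX
      simp only [lderiv_nil, List.length_nil, Nat.cast_zero, sub_zero] at *
      calc |f X * g X| = |f X| * |g X| := abs_mul _ _
        _ ≤ (C * ‖X‖ ^ m) * (C' * ‖X‖ ^ m') := by
            apply mul_le_mul (hC X hX) (hC' X hX) (abs_nonneg _)
            positivity
        _ = (C * C') * ‖X‖ ^ (m + m') := by rw [zpow_add₀ hn]; ring
    · rw [List.concat_eq_append] at hL ⊢
      have hL' : L'.length ≤ t := by simp at hL; omega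
      -- the two pieces
      have hfd : DifferentiableOn ℝ f {X | X ≠ 0} := hfs.differentiableOn wtop_one
      have hgd : DifferentiableOn ℝ g {X | X ≠ 0} := hgs.differentiableOn wtop_one
      have hpfs : ContDiffOn ℝ (⊤:ℕ∞) (pderiv1 j f) {X | X ≠ 0} := contDiffOn_pderiv1 isOpenU hfs j
      have hpgs : ContDiffOn ℝ (⊤:ℕ∞) (pderiv1 j g) {X | X ≠ 0} := contDiffOn_pderiv1 isOpenU hgs j
      obtain ⟨C1, hC10, hC1⟩ := ih (m-1) m' (pderiv1 j f) g hpfs hgs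
        (bnd_pderiv1 hf j) (bnd_mono hg (by omega)) L' hL'
      obtain ⟨C2, hC20, hC2⟩ := ih m (m'-1) f (pderiv1 j g) hfs hpgs
        (bnd_mono hf (by omega)) (bnd_pderiv1 hg j) L' hL'
      refine ⟨C1 + C2, by positivity, fun X hX => ?_⟩
      have hXU : X ∈ {X : EuclideanSpace ℝ (Fin n) | X ≠ 0} := hX
      -- rewrite the derivative
      have e1 : lderiv (L' ++ [j]) (fun X => f X * g X) X
          = lderiv L' (pderiv1 j (fun X => f X * g X)) X := by rw [lderiv_append]; rfl
      have e2 : Set.EqOn (pderiv1 j (fun X => f X * g X))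
          (fun X => pderiv1 j f X * g X + f X * pderiv1 j g X) {X | X ≠ 0} :=
        fun Y hY => pderiv1_mul_on isOpenU hfd hgd j hY
      have e3 : lderiv L' (pderiv1 j (fun X => f X * g X)) X
          = lderiv L' (fun X => pderiv1 j f X * g X + f X * pderiv1 j g X) X :=
        lderiv_congrOn isOpenU e2 L' hXU
      have e4 : lderiv L' (fun X => pderiv1 j f X * g X + f X * pderiv1 j g X) X
          = lderiv L' (fun X => pderiv1 j f X * g X) X
            + lderiv L' (fun X => f X * pderiv1 j g X) X :=
        lderiv_add_on isOpenU (hpfs.mul hgs) (hfs.mul hpgs) L' hXU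
      rw [e1, e3, e4]
      have b1 := hC1 X hX
      have b2 := hC2 X hX
      have hlen : ((L' ++ [j]).length : ℤ) = (L'.length : ℤ) + 1 := by simp
      have hexp1 : (m - 1 + m') - (L'.length : ℤ) = (m + m') - ((L' ++ [j]).length : ℤ) := by
        rw [hlen]; ring
      have hexp2 : (m + (m' - 1)) - (L'.length : ℤ) = (m + m') - ((L' ++ [j]).length : ℤ) := by
        rw [hlen]; ring
      rw [hexp1] at b1
      rw [hexp2] at b2
      calc |lderiv L' (fun X => pderiv1 j f X * g X) X
            + lderiv L' (fun X => f X * pderiv1 j g X) X|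
          ≤ |lderiv L' (fun X => pderiv1 j f X * g X) X|
            + |lderiv L' (fun X => f X * pderiv1 j g X) X| := abs_add_le _ _
        _ ≤ C1 * ‖X‖ ^ (m + m' - ((L' ++ [j]).length : ℤ))
            + C2 * ‖X‖ ^ (m + m' - ((L' ++ [j]).length : ℤ)) := add_le_add b1 b2
        _ = (C1 + C2) * ‖X‖ ^ (m + m' - ((L' ++ [j]).length : ℤ)) := by ring

lemma PS.bnd {m : ℤ} {f} (h : PS m f) (t : ℕ) : Bnd t m (f : EuclideanSpace ℝ (Fin n) → ℝ) :=
  fun L _ => h.2 L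

lemma PS_of_bnd {m : ℤ} {f : EuclideanSpace ℝ (Fin n) → ℝ}
    (hs : ContDiffOn ℝ (⊤:ℕ∞) f {X | X ≠ 0}) (h : ∀ t, Bnd t m f) : PS m f :=
  ⟨hs, fun L => h L.length L (le_refl _)⟩

lemma PS.mul {m m' : ℤ} {f g : EuclideanSpace ℝ (Fin n) → ℝ} (hf : PS m f) (hg : PS m' g) :
    PS (m + m') (fun X => f X * g X) :=
  PS_of_bnd (hf.1.mul hg.1) (fun t => bnd_mul t m m' f g hf.1 hg.1 (hf.bnd t) (hg.bnd t))

lemma PS.congr {m : ℤ} {f g : EuclideanSpace ℝ (Fin n) → ℝ} (hf : PS m f)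
    (h : Set.EqOn f g {X | X ≠ 0}) : PS m g := by
  refine ⟨hf.1.congr fun x hx => (h hx).symm, fun L => ?_⟩
  obtain ⟨C, hC0, hC⟩ := hf.2 L
  exact ⟨C, hC0, fun X hX => by rw [← lderiv_congrOn isOpenU h L hX]; exact hC X hX⟩

lemma PS.pd {m : ℤ} {f : EuclideanSpace ℝ (Fin n) → ℝ} (hf : PS m f) (j : Fin n) :
    PS (m - 1) (pderiv1 j f) :=
  PS_of_bnd (contDiffOn_pderiv1 isOpenU hf.1 j) (fun t => bnd_pderiv1 (hf.bnd (t+1)) j)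

lemma PS.inv {m : ℤ} {f : EuclideanSpace ℝ (Fin n) → ℝ} (hf : PS m f)
    (hlow : ∀ X : EuclideanSpace ℝ (Fin n), X ≠ 0 → ‖X‖ ^ m ≤ |f X|) :
    PS (-m) (fun X => (f X)⁻¹) := by
  have hne : ∀ X : EuclideanSpace ℝ (Fin n), X ≠ 0 → f X ≠ 0 := by
    intro X hX
    have h1 : (0:ℝ) < ‖X‖ ^ m := zpow_pos (norm_pos_iff.2 hX) m
    have := lt_of_lt_of_le h1 (hlow X hX)
    exact abs_pos.1 this
  have hs : ContDiffOn ℝ (⊤:ℕ∞) (fun X => (f X)⁻¹) {X | X ≠ 0} := hf.1.inv hne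
  refine PS_of_bnd hs (fun t => ?_)
  induction t with
  | zero =>
    intro L hL
    obtain rfl : L = [] := List.eq_nil_of_length_eq_zero (Nat.le_zero.1 hL)
    refine ⟨1, zero_le_one, fun X hX => ?_⟩
    simp only [lderiv_nil, List.length_nil, Nat.cast_zero, sub_zero, one_mul]
    rw [abs_inv]
    have h1 : (0:ℝ) < ‖X‖ ^ m := zpow_pos (norm_pos_iff.2 hX) m
    calc |f X|⁻¹ ≤ (‖X‖ ^ m)⁻¹ := by gcongr; exact hlow X hX
      _ = ‖X‖ ^ (-m) := (zpow_neg _ _).symm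
  | succ t ih =>
    intro L hL
    rcases List.eq_nil_or_concat L with rfl | ⟨L', j, rfl⟩
    · exact ih [] (by simp) |>.imp fun C h => ⟨h.1, h.2⟩
    · rw [List.concat_eq_append] at hL ⊢
      have hL' : L'.length ≤ t := by simp at hL; omega
      have hfd : DifferentiableOn ℝ f {X | X ≠ 0} := hf.1.differentiableOn wtop_one
      -- pderiv1 j (f⁻¹) = -(pderiv1 j f) * f⁻¹ * f⁻¹ on U
      have e2 : Set.EqOn (pderiv1 j (fun X => (f X)⁻¹))
          (fun X => (-1) * (pderiv1 j f X * ((f X)⁻¹ * (f X)⁻¹))) {X | X ≠ 0} := by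
        intro Y hY
        have hfy : f Y ≠ 0 := hne Y hY
        have hd : DifferentiableAt ℝ f Y := hfd.differentiableAt (isOpenU.mem_nhds hY)
        have h1 : HasFDerivAt (fun X => (f X)⁻¹)
            ((-((f Y)^2)⁻¹) • (fderiv ℝ f Y)) Y :=
          (hasDerivAt_inv hfy).comp_hasFDerivAt Y hd.hasFDerivAt
        show pderiv1 j (fun X => (f X)⁻¹) Y = _
        unfold pderiv1
        rw [h1.fderiv]
        simp only [ContinuousLinearMap.coe_smul', Pi.smul_apply, smul_eq_mul]
        show _ = (-1) * (fderiv ℝ f Y (EuclideanSpace.single j 1) * ((f Y)⁻¹ * (f Y)⁻¹))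
        rw [sq, mul_inv]
        ring
      -- bounds
      have hpfs : ContDiffOn ℝ (⊤:ℕ∞) (pderiv1 j f) {X | X ≠ 0} := contDiffOn_pderiv1 isOpenU hf.1 j
      have hinvb : Bnd t (-m) (fun X => (f X)⁻¹) := fun L h => ih L h
      have hprod : Bnd t ((m-1) + ((-m) + (-m)))
          (fun X => pderiv1 j f X * ((f X)⁻¹ * (f X)⁻¹)) := by
        apply bnd_mul t (m-1) ((-m) + (-m)) _ _ hpfs (hs.mul hs)
          (bnd_pderiv1 (hf.bnd (t+1)) j)
        exact bnd_mul t (-m) (-m) _ _ hs hs hinvb hinvb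
      obtain ⟨C, hC0, hC⟩ := hprod L' hL'
      refine ⟨C, hC0, fun X hX => ?_⟩
      have hXU : X ∈ {X : EuclideanSpace ℝ (Fin n) | X ≠ 0} := hX
      have e1 : lderiv (L' ++ [j]) (fun X => (f X)⁻¹) X
          = lderiv L' (pderiv1 j (fun X => (f X)⁻¹)) X := by rw [lderiv_append]; rfl
      have e3 := lderiv_congrOn isOpenU e2 L' hXU
      have e4 := lderiv_const_mul_on isOpenU (hpfs.mul (hs.mul hs)) (-1) L' hXU
      rw [e1, e3, e4]
      rw [abs_mul, abs_neg, abs_one, one_mul]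
      have := hC X hX
      have hexp : (m - 1 + (-m + -m)) - (L'.length : ℤ) = (-m) - ((L' ++ [j]).length : ℤ) := by
        simp; ring
      rw [hexp] at this
      exact this

end Stmt15
namespace Stmt15
variable {n : ℕ}

lemma lderiv_const_ne_nil (c : ℝ) : ∀ (L : List (Fin n)), L ≠ [] →
    lderiv L (fun _ => c) = fun _ => 0 := by
  intro L
  induction L with
  | nil => intro h; exact absurd rfl h
  | cons j L ih =>
    intro _
    rcases eq_or_ne L [] with rfl | hL
    · rw [lderiv_cons, lderiv_nil]; exact pderiv1_const c j
    · rw [lderiv_cons, ih hL]; exact pderiv1_const 0 j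

lemma PS_const (c : ℝ) : PS 0 (fun _ : EuclideanSpace ℝ (Fin n) => c) := by
  refine ⟨contDiffOn_const, fun L => ?_⟩
  rcases eq_or_ne L [] with rfl | hL
  · refine ⟨|c|, abs_nonneg c, fun X hX => ?_⟩
    simp [zpow_zero]
  · refine ⟨0, le_refl _, fun X hX => ?_⟩
    rw [lderiv_const_ne_nil c L hL]
    simp

lemma PS.sum {ι : Type*} (t : Finset ι) (F : ι → EuclideanSpace ℝ (Fin n) → ℝ) (m : ℤ)
    (hF : ∀ i ∈ t, PS m (F i)) : PS m (fun X => ∑ i ∈ t, F i X) := by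
  classical
  refine ⟨ContDiffOn.sum (fun i hi => (hF i hi).1), fun L => ?_⟩
  choose C hC0 hC using fun (i : ι) (hi : i ∈ t) => (hF i hi).2 L
  refine ⟨∑ i ∈ t.attach, C i.1 i.2, Finset.sum_nonneg (fun i _ => hC0 _ _), fun X hX => ?_⟩
  rw [lderiv_sum_on isOpenU t F (fun i hi => (hF i hi).1) L hX]
  calc |∑ i ∈ t, lderiv L (F i) X| = |∑ i ∈ t.attach, lderiv L (F i.1) X| := by
        congr 1
        exact (Finset.sum_attach t (fun i => lderiv L (F i) X)).symm
    _ ≤ ∑ i ∈ t.attach, |lderiv L (F i.1) X| := Finset.abs_sum_le_sum_abs _ _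
    _ ≤ ∑ i ∈ t.attach, C i.1 i.2 * ‖X‖ ^ (m - L.length) :=
        Finset.sum_le_sum (fun i _ => hC i.1 i.2 X hX)
    _ = (∑ i ∈ t.attach, C i.1 i.2) * ‖X‖ ^ (m - L.length) := by rw [Finset.sum_mul]

lemma abs_coord_le_norm (X : EuclideanSpace ℝ (Fin n)) (j : Fin n) : |X j| ≤ ‖X‖ := by
  have h2 : (X j)^2 ≤ ∑ i, (X i)^2 :=
    Finset.single_le_sum (f := fun i => (X i)^2) (fun i _ => sq_nonneg _) (Finset.mem_univ j)
  have h3 : (X j)^2 ≤ ‖X‖^2 := by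
    rw [EuclideanSpace.norm_eq, Real.sq_sqrt (by positivity)]
    simpa [sq_abs] using h2
  calc |X j| = Real.sqrt ((X j)^2) := (Real.sqrt_sq_eq_abs _).symm
    _ ≤ Real.sqrt (‖X‖^2) := Real.sqrt_le_sqrt h3
    _ = ‖X‖ := Real.sqrt_sq (norm_nonneg _)

lemma pderiv1_coord (i j : Fin n) :
    pderiv1 i (fun X : EuclideanSpace ℝ (Fin n) => X j)
      = fun _ => (if j = i then (1:ℝ) else 0) := by
  funext x
  show fderiv ℝ (fun X : EuclideanSpace ℝ (Fin n) => X j) x (EuclideanSpace.single i 1) = _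
  rw [show (fun X : EuclideanSpace ℝ (Fin n) => X j) = ⇑(EuclideanSpace.proj (𝕜 := ℝ) j) from rfl,
    (EuclideanSpace.proj (𝕜 := ℝ) j).fderiv]
  simp [EuclideanSpace.single_apply]

lemma contDiff_coord (j : Fin n) :
    ContDiff ℝ (⊤:ℕ∞) (fun X : EuclideanSpace ℝ (Fin n) => X j) :=
  (EuclideanSpace.proj (𝕜 := ℝ) j).contDiff

lemma lderiv_coord_cons (j : Fin n) : ∀ (L : List (Fin n)) (i : Fin n),
    ∃ c : ℝ, |c| ≤ 1 ∧ (L ≠ [] → c = 0) ∧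
      lderiv (i :: L) (fun X : EuclideanSpace ℝ (Fin n) => X j) = fun _ => c := by
  intro L
  induction L with
  | nil =>
    intro i
    refine ⟨if j = i then 1 else 0, by split <;> norm_num, fun h => absurd rfl h, ?_⟩
    rw [lderiv_cons, lderiv_nil]
    exact pderiv1_coord i j
  | cons i' L ih =>
    intro i
    obtain ⟨c, _, _, hc⟩ := ih i'
    refine ⟨0, by norm_num, fun _ => rfl, ?_⟩
    rw [lderiv_cons, hc]
    exact pderiv1_const c i

lemma PS_coord (j : Fin n) : PS 1 (fun X : EuclideanSpace ℝ (Fin n) => X j) := by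
  refine ⟨(contDiff_coord j).contDiffOn, fun L => ?_⟩
  rcases L with _ | ⟨i, L⟩
  · refine ⟨1, zero_le_one, fun X hX => ?_⟩
    simpa using abs_coord_le_norm X j
  · obtain ⟨c, hc1, hc0, hc⟩ := lderiv_coord_cons j L i
    refine ⟨1, zero_le_one, fun X hX => ?_⟩
    rw [hc]
    rcases eq_or_ne L [] with rfl | hL
    · simpa using hc1
    · rw [hc0 hL]
      simp only [abs_zero, one_mul]
      positivity

/-- the squared norm as a function -/
noncomputable def sfun : EuclideanSpace ℝ (Fin n) → ℝ := fun X => ∑ i, X i ^ 2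

lemma sfun_eq (X : EuclideanSpace ℝ (Fin n)) : sfun X = ‖X‖ ^ 2 := by
  rw [EuclideanSpace.norm_eq, Real.sq_sqrt (by positivity)]
  simp [sfun, sq_abs]

lemma sfun_pos {X : EuclideanSpace ℝ (Fin n)} (hX : X ≠ 0) : 0 < sfun X := by
  rw [sfun_eq]
  have := norm_pos_iff.2 hX; positivity

lemma sfun_ne {X : EuclideanSpace ℝ (Fin n)} (hX : X ≠ 0) : sfun X ≠ 0 := (sfun_pos hX).ne'

lemma contDiff_sfun : ContDiff ℝ (⊤:ℕ∞) (sfun (n := n)) := by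
  apply ContDiff.sum
  intro i _
  simpa [sq] using (contDiff_coord i).mul (contDiff_coord i)

lemma spow_eq {X : EuclideanSpace ℝ (Fin n)} (hX : X ≠ 0) (k : ℤ) :
    sfun X ^ k = ‖X‖ ^ (2 * k) := by
  rw [sfun_eq, ← zpow_natCast ‖X‖ 2, ← zpow_mul]
  norm_num

lemma PS_sfun : PS 2 (sfun (n := n)) := by
  have h : PS 2 (fun X : EuclideanSpace ℝ (Fin n) => ∑ i, (fun Y : EuclideanSpace ℝ (Fin n) => Y i * Y i) X) := by
    apply PS.sum Finset.univ _ 2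
    intro i _
    exact PS.mul (PS_coord i) (PS_coord i)
  exact h.congr (fun X _ => by simp [sfun, sq])

lemma PS_spow_nat (k : ℕ) : PS (2 * k) (fun X : EuclideanSpace ℝ (Fin n) => sfun X ^ (k:ℤ)) := by
  induction k with
  | zero => exact (PS_const 1).congr (fun X _ => by simp)
  | succ k ih =>
    have h := ih.mul PS_sfun
    have h2 : (2*(k:ℤ) + 2) = 2 * ((k:ℕ)+1 : ℕ) := by push_cast; ring
    rw [h2] at h
    apply h.congr
    intro X hX
    show sfun X ^ (k:ℤ) * sfun X = sfun X ^ (((k:ℕ)+1 : ℕ) : ℤ)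
    rw [← zpow_add_one₀ (sfun_ne hX)]
    norm_num

lemma PS_spow (k : ℤ) : PS (2 * k) (fun X : EuclideanSpace ℝ (Fin n) => sfun X ^ k) := by
  rcases le_or_gt 0 k with hk | hk
  · obtain ⟨m, rfl⟩ := Int.eq_ofNat_of_zero_le hk
    exact PS_spow_nat m
  · have hm : k = -(((k.natAbs):ℕ):ℤ) := by omega
    set m : ℕ := k.natAbs with hmdef
    have hlow : ∀ X : EuclideanSpace ℝ (Fin n), X ≠ 0 →
        ‖X‖ ^ ((2:ℤ) * m) ≤ |sfun X ^ ((m:ℕ):ℤ)| := by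
      intro X hX
      rw [spow_eq hX, abs_of_pos (zpow_pos (norm_pos_iff.2 hX) _)]
    have h := (PS_spow_nat m).inv hlow
    rw [show (-(2 * ((m:ℕ):ℤ)) = 2 * (-((m:ℕ):ℤ))) from by ring, ← hm] at h
    apply h.congr
    intro X hX
    show (sfun X ^ ((m:ℕ):ℤ))⁻¹ = sfun X ^ k
    rw [← zpow_neg, ← hm]

lemma pderiv1_sfun (j : Fin n) (x : EuclideanSpace ℝ (Fin n)) :
    pderiv1 j sfun x = 2 * x j := by
  have hdiff : ∀ i : Fin n, DifferentiableOn ℝ (fun X : EuclideanSpace ℝ (Fin n) => X i) Set.univ :=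
    fun i => ((contDiff_coord i).differentiable wtop_one).differentiableOn
  have h1 : pderiv1 j (fun X : EuclideanSpace ℝ (Fin n) => ∑ i, (fun Y : EuclideanSpace ℝ (Fin n) => Y i * Y i) X) x
      = ∑ i, pderiv1 j (fun Y : EuclideanSpace ℝ (Fin n) => Y i * Y i) x := by
    have := lderiv_sum_on (u := Set.univ) isOpen_univ Finset.univ
      (fun i (Y : EuclideanSpace ℝ (Fin n)) => Y i * Y i)
      (fun i _ => (((contDiff_coord i).mul (contDiff_coord i))).contDiffOn) [j] (Set.mem_univ x)
    simpa [lderiv] using this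
  have h0 : pderiv1 j (sfun (n := n)) x = pderiv1 j (fun X : EuclideanSpace ℝ (Fin n) => ∑ i, (fun Y : EuclideanSpace ℝ (Fin n) => Y i * Y i) X) x := by
    apply congrFun
    apply congrArg
    funext Y
    simp [sfun, sq]
  rw [h0, h1]
  have h2 : ∀ i, pderiv1 j (fun Y : EuclideanSpace ℝ (Fin n) => Y i * Y i) x
      = (if i = j then (1:ℝ) else 0) * x i + x i * (if i = j then (1:ℝ) else 0) := by
    intro i
    rw [pderiv1_mul_on (u := Set.univ) isOpen_univ (hdiff i) (hdiff i) j (Set.mem_univ x),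
      pderiv1_coord j i]
  simp only [h2]
  rw [Finset.sum_congr rfl (fun i _ => by ring_nf :
    ∀ i ∈ Finset.univ, ((if i = j then (1:ℝ) else 0) * x i + x i * (if i = j then (1:ℝ) else 0))
      = 2 * x i * (if i = j then (1:ℝ) else 0))]
  simp [Finset.sum_ite_eq]

lemma pderiv1_spow (k : ℤ) (j : Fin n) {X : EuclideanSpace ℝ (Fin n)} (hX : X ≠ 0) :
    pderiv1 j (fun Y => sfun Y ^ k) X = 2 * k * X j * sfun X ^ (k - 1) := by
  have hs0 : sfun X ≠ 0 := sfun_ne hX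
  have h1 : HasDerivAt (fun y : ℝ => y ^ k) ((k:ℝ) * sfun X ^ (k - 1)) (sfun X) :=
    hasDerivAt_zpow k _ (Or.inl hs0)
  have h2 : HasFDerivAt (sfun (n := n)) (fderiv ℝ sfun X) X :=
    ((contDiff_sfun.differentiable wtop_one) X).hasFDerivAt
  have h3 := h1.comp_hasFDerivAt X h2
  show fderiv ℝ (fun Y => sfun Y ^ k) X (EuclideanSpace.single j 1) = _
  rw [show (fun Y : EuclideanSpace ℝ (Fin n) => sfun Y ^ k) = (fun y : ℝ => y ^ k) ∘ sfun from rfl,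
    h3.fderiv]
  simp only [ContinuousLinearMap.coe_smul', Pi.smul_apply, smul_eq_mul]
  rw [show fderiv ℝ sfun X (EuclideanSpace.single j 1) = pderiv1 j sfun X from rfl, pderiv1_sfun]
  ring

end Stmt15
namespace Stmt15
variable {n : ℕ}

/-- The Laplacian (sum of repeated partials). -/
noncomputable def lap (f : EuclideanSpace ℝ (Fin n) → ℝ) (X : EuclideanSpace ℝ (Fin n)) : ℝ :=
  ∑ j, pderiv1 j (pderiv1 j f) X

lemma lap_eq_lderiv (f : EuclideanSpace ℝ (Fin n) → ℝ) (X : EuclideanSpace ℝ (Fin n)) :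
    lap f X = ∑ j, lderiv [j, j] f X := rfl

lemma PS.lap {m : ℤ} {f : EuclideanSpace ℝ (Fin n) → ℝ} (hf : PS m f) :
    PS (m - 2) (Stmt15.lap f) := by
  have h : PS (m - 2) (fun X => ∑ j : Fin n, pderiv1 j (pderiv1 j f) X) := by
    apply PS.sum Finset.univ _ (m - 2)
    intro j _
    have := (hf.pd j).pd j
    rwa [show m - 1 - 1 = m - 2 from by ring] at this
  exact h

lemma lap_congrOn {f g : EuclideanSpace ℝ (Fin n) → ℝ}
    (h : Set.EqOn f g {X | X ≠ 0}) {X : EuclideanSpace ℝ (Fin n)} (hX : X ≠ 0) :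
    lap f X = lap g X := by
  unfold lap
  exact Finset.sum_congr rfl fun j _ =>
    lderiv_congrOn isOpenU h [j, j] hX

lemma lap_sub_on {f g : EuclideanSpace ℝ (Fin n) → ℝ}
    (hf : ContDiffOn ℝ (⊤:ℕ∞) f {X | X ≠ 0}) (hg : ContDiffOn ℝ (⊤:ℕ∞) g {X | X ≠ 0})
    {X : EuclideanSpace ℝ (Fin n)} (hX : X ≠ 0) :
    lap (fun Y => f Y - g Y) X = lap f X - lap g X := by
  have hng : ContDiffOn ℝ (⊤:ℕ∞) (fun Y => (-1 : ℝ) * g Y) {X | X ≠ 0} :=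
    (contDiffOn_const (c := (-1:ℝ))).mul hg
  unfold lap
  rw [← Finset.sum_sub_distrib]
  apply Finset.sum_congr rfl
  intro j _
  have e1 : Set.EqOn (fun Y => f Y - g Y) (fun Y => f Y + (-1 : ℝ) * g Y) {X | X ≠ 0} :=
    fun Y _ => by ring
  have e2 := lderiv_congrOn isOpenU e1 [j, j] hX
  have e3 := lderiv_add_on isOpenU hf hng [j, j] hX
  have e4 := lderiv_const_mul_on isOpenU hg (-1) [j, j] hX
  show lderiv [j, j] (fun Y => f Y - g Y) X = lderiv [j, j] f X - lderiv [j, j] g X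
  rw [e2, e3]
  show lderiv [j, j] f X + lderiv [j, j] (fun Y => (-1:ℝ) * g Y) X = _
  rw [e4]
  show lderiv [j, j] f X + (-1) * lderiv [j, j] g X = _
  ring

lemma lap_const_mul_on {g : EuclideanSpace ℝ (Fin n) → ℝ} (c : ℝ)
    (hg : ContDiffOn ℝ (⊤:ℕ∞) g {X | X ≠ 0})
    {X : EuclideanSpace ℝ (Fin n)} (hX : X ≠ 0) :
    lap (fun Y => c * g Y) X = c * lap g X := by
  unfold lap
  rw [Finset.mul_sum]
  exact Finset.sum_congr rfl fun j _ => lderiv_const_mul_on isOpenU hg c [j, j] hX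

lemma lap_spow (k : ℤ) {X : EuclideanSpace ℝ (Fin n)} (hX : X ≠ 0) :
    lap (fun Y => sfun Y ^ k) X = (2*k*(n + 2*(k-1))) * sfun X ^ (k-1) := by
  have hsm : ∀ m : ℤ, ContDiffOn ℝ (⊤:ℕ∞) (fun Y : EuclideanSpace ℝ (Fin n) => sfun Y ^ m)
      {X | X ≠ 0} := fun m => (PS_spow m).1
  have key : ∀ j : Fin n, pderiv1 j (pderiv1 j (fun Y => sfun Y ^ k)) X
      = 2*k*(sfun X ^ (k-1)) + (4*k*(k-1)) * ((X j)^2 * sfun X ^ (k-2)) := by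
    intro j
    have e1 : Set.EqOn (pderiv1 j (fun Y => sfun Y ^ k))
        (fun Y => (2*(k:ℝ)) * (Y j * sfun Y ^ (k-1))) {X | X ≠ 0} := by
      intro Y hY
      rw [pderiv1_spow k j hY]
      ring
    have hd1 : DifferentiableOn ℝ (fun Y : EuclideanSpace ℝ (Fin n) => Y j) {X | X ≠ 0} :=
      ((contDiff_coord j).differentiable wtop_one).differentiableOn
    have hd2 : DifferentiableOn ℝ (fun Y : EuclideanSpace ℝ (Fin n) => sfun Y ^ (k-1))
        {X | X ≠ 0} := (hsm (k-1)).differentiableOn wtop_one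
    have hdm : DifferentiableOn ℝ (fun Y : EuclideanSpace ℝ (Fin n) => Y j * sfun Y ^ (k-1))
        {X | X ≠ 0} := hd1.mul hd2
    rw [pderiv1_congrOn isOpenU e1 j hX,
      pderiv1_const_mul_on isOpenU hdm (2*(k:ℝ)) j hX,
      pderiv1_mul_on isOpenU hd1 hd2 j hX,
      pderiv1_coord j j, pderiv1_spow (k-1) j hX]
    have hite : (if j = j then (1:ℝ) else 0) = 1 := by simp
    rw [hite, show (k - 1 - 1 : ℤ) = k - 2 from by ring]
    push_cast
    ring
  unfold lap
  rw [Finset.sum_congr rfl fun j _ => key j, Finset.sum_add_distrib, Finset.sum_const,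
    ← Finset.mul_sum, ← Finset.sum_mul]
  have hs : (∑ j : Fin n, (X j)^2) = sfun X := rfl
  rw [hs]
  have hss : sfun X * sfun X ^ (k-2) = sfun X ^ (k-1) := by
    rw [mul_comm, ← zpow_add_one₀ (sfun_ne hX), show (k - 2 + 1 : ℤ) = k - 1 from by ring]
  rw [nsmul_eq_mul, Finset.card_univ, Fintype.card_fin, hss]
  push_cast
  ring

end Stmt15
namespace Stmt15

lemma jb_bound {n : ℕ} (t : ℕ) (X : EuclideanSpace ℝ (Fin n)) (hX : X ≠ 0) :
    jb X ^ (-(2:ℝ) - (t:ℝ)) ≤ ‖X‖ ^ (-2 - (t:ℤ)) := by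
  have hXpos : (0:ℝ) < ‖X‖ := norm_pos_iff.2 hX
  have hjb1 : (1:ℝ) ≤ jb X := by
    unfold jb
    calc (1:ℝ) = Real.sqrt 1 := (Real.sqrt_one).symm
      _ ≤ Real.sqrt (1 + ‖X‖^2) := Real.sqrt_le_sqrt (by nlinarith [sq_nonneg ‖X‖])
  have hjb2 : ‖X‖ ≤ jb X := by
    unfold jb
    calc ‖X‖ = Real.sqrt (‖X‖^2) := (Real.sqrt_sq (norm_nonneg X)).symm
      _ ≤ Real.sqrt (1 + ‖X‖^2) := Real.sqrt_le_sqrt (by nlinarith)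
  have he : -(2:ℝ) - (t:ℝ) ≤ 0 := by
    have : (0:ℝ) ≤ (t:ℝ) := Nat.cast_nonneg t
    linarith
  rcases le_or_gt 1 ‖X‖ with h1 | h1
  · have h2 : jb X ^ (-(2:ℝ) - (t:ℝ)) ≤ ‖X‖ ^ (-(2:ℝ) - (t:ℝ)) :=
      Real.rpow_le_rpow_of_nonpos hXpos hjb2 he
    have h3 : ‖X‖ ^ (-(2:ℝ) - (t:ℝ)) = ‖X‖ ^ (-2 - (t:ℤ)) := by
      rw [show (-(2:ℝ) - (t:ℝ)) = ((-2 - (t:ℤ) : ℤ) : ℝ) from by push_cast; ring,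
        Real.rpow_intCast]
    rw [← h3]
    exact h2
  · have h2 : jb X ^ (-(2:ℝ) - (t:ℝ)) ≤ 1 :=
      Real.rpow_le_one_of_one_le_of_nonpos hjb1 he
    have h4 : ‖X‖ ^ (-2 - (t:ℤ)) = (‖X‖ ^ ((2 + t : ℕ)))⁻¹ := by
      rw [show (-2 - (t:ℤ)) = -((2 + t : ℕ) : ℤ) from by push_cast; ring, zpow_neg,
        zpow_natCast]
    have h5 : ‖X‖ ^ ((2 + t : ℕ)) ≤ 1 := pow_le_one₀ (norm_nonneg X) h1.le
    have h6 : (1:ℝ) ≤ (‖X‖ ^ ((2 + t : ℕ)))⁻¹ :=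
      (one_le_inv₀ (by positivity)).2 h5
    rw [h4]
    exact h2.trans h6

lemma PS_b {d : ℕ} {b : EuclideanSpace ℝ (Fin (2*d)) → ℝ} (hb : IsAdmissibleSymbol d b) :
    PS (-2) b := by
  have hsm : ContDiff ℝ (⊤:ℕ∞) b := hb.1.of_le (by simp)
  refine ⟨hsm.contDiffOn, fun L => ?_⟩
  classical
  set α : Fin (2*d) → ℕ := fun j => L.count j with hα
  have hperm : L.Perm (canonList α) :=
    List.perm_iff_count.2 fun a => by rw [count_canonList]
  obtain ⟨C, hC⟩ := hb.2.1 α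
  have hC0 : 0 ≤ C := by
    have h0 := hC 0
    have hpos : (0:ℝ) < jb (0 : EuclideanSpace ℝ (Fin (2*d))) ^ (-(2:ℝ) - ∑ j, ((α j:ℕ):ℝ)) := by
      apply Real.rpow_pos_of_pos
      unfold jb
      apply Real.sqrt_pos.2
      positivity
    nlinarith [abs_nonneg (mderiv α b 0)]
  refine ⟨C, hC0, fun X hX => ?_⟩
  have e1 : lderiv L b X = mderiv α b X := by
    rw [mderiv_eq_lderiv, lderiv_perm hsm hperm]
  rw [e1]
  have hlen : (L.length : ℤ) = ((∑ j, α j : ℕ) : ℤ) := by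
    rw [hperm.length_eq, length_canonList]
  calc |mderiv α b X| ≤ C * jb X ^ (-(2:ℝ) - ∑ j, ((α j:ℕ):ℝ)) := hC X
    _ ≤ C * ‖X‖ ^ (-2 - (L.length:ℤ)) := by
        apply mul_le_mul_of_nonneg_left _ hC0
        have hcast : (∑ j, ((α j:ℕ):ℝ)) = (((∑ j, α j : ℕ) : ℕ):ℝ) := by push_cast; rfl
        rw [hcast, show (-2 - (L.length:ℤ)) = -2 - ((∑ j, α j : ℕ):ℤ) from by rw [hlen]]
        exact jb_bound (∑ j, α j) X hX

/-- the coefficient of `b_{d,j}` -/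
noncomputable def cst (d j : ℕ) : ℝ :=
  (-1 : ℝ) ^ j * ((2*j - 1)‼ : ℝ) * ∏ l ∈ Finset.Icc 1 j, ((d : ℝ) - 2 * l)

lemma bdj_eq (d j : ℕ) (X : EuclideanSpace ℝ (Fin (2*d))) :
    bdj d j X = cst d j * ‖X‖ ^ (-2 - 4*(j:ℤ)) := by
  unfold bdj cst
  split
  · rename_i h
    subst h
    norm_num [Nat.doubleFactorial]
  · rfl

lemma dfac_succ (j : ℕ) : ((2*(j+1) - 1)‼ : ℕ) = (2*j+1) * (2*j - 1)‼ := by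
  cases j with
  | zero => decide
  | succ i =>
    rw [show 2*(i+1+1)-1 = (2*i+1)+2 from by omega, Nat.doubleFactorial_add_two,
      show 2*(i+1)+1 = 2*i+1+2 from by omega, show 2*(i+1)-1 = 2*i+1 from by omega]

lemma cst_succ (d j : ℕ) :
    cst d (j+1) = -((2*(j:ℝ)+1) * ((d:ℝ) - 2*((j:ℝ)+1))) * cst d j := by
  unfold cst
  rw [Finset.prod_Icc_succ_top (by omega : 1 ≤ j+1), dfac_succ j]
  push_cast
  ring

lemma PS_bdj (d j : ℕ) : PS (n := 2*d) (-2 - 4*(j:ℤ)) (bdj d j) := by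
  have h := (PS_const (n := 2*d) (cst d j)).mul (PS_spow (-1 - 2*(j:ℤ)))
  rw [show ((0:ℤ) + 2 * (-1 - 2*(j:ℤ))) = -2 - 4*(j:ℤ) from by ring] at h
  apply h.congr
  intro X hX
  show cst d j * sfun X ^ (-1 - 2*(j:ℤ)) = bdj d j X
  rw [bdj_eq, spow_eq hX, show 2 * (-1 - 2*(j:ℤ)) = -2 - 4*(j:ℤ) from by ring]

lemma key_lap (d j : ℕ) {X : EuclideanSpace ℝ (Fin (2*d))} (hX : X ≠ 0) :
    sfun X * bdj d (j+1) X = (1/4) * lap (bdj d j) X := by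
  set k : ℤ := -1 - 2*(j:ℤ) with hk
  have e0 : Set.EqOn (bdj d j) (fun Y => cst d j * sfun Y ^ k) {X | X ≠ 0} := by
    intro Y hY
    show bdj d j Y = cst d j * sfun Y ^ k
    rw [bdj_eq, spow_eq hY, hk, show 2*(-1-2*(j:ℤ)) = -2 - 4*(j:ℤ) from by ring]
  have e2 : sfun X * bdj d (j+1) X = cst d (j+1) * sfun X ^ (k-1) := by
    rw [bdj_eq d (j+1) X,
      show (-2 - 4*(((j+1:ℕ)):ℤ)) = 2*(k-2) from by rw [hk]; push_cast; ring,
      ← spow_eq hX (k-2), ← mul_assoc, mul_comm (sfun X) (cst d (j+1)), mul_assoc,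
      show sfun X * sfun X ^ (k-2) = sfun X ^ (k-1) from by
        rw [mul_comm, ← zpow_add_one₀ (sfun_ne hX), show (k-2+1:ℤ) = k-1 from by ring]]
  rw [e2, lap_congrOn e0 hX, lap_const_mul_on (cst d j) (PS_spow k).1 hX, lap_spow k hX,
    cst_succ, hk]
  push_cast
  ring

/-- the remainder -/
noncomputable def rfn (d : ℕ) (b : EuclideanSpace ℝ (Fin (2*d)) → ℝ) (N : ℕ) :
    EuclideanSpace ℝ (Fin (2*d)) → ℝ :=
  fun X => b X - ∑ j ∈ Finset.range N, bdj d j X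

lemma rfn_zero {d : ℕ} (b : EuclideanSpace ℝ (Fin (2*d)) → ℝ) : rfn d b 0 = b :=
  funext fun X => by simp [rfn]

lemma rfn_succ {d : ℕ} (b : EuclideanSpace ℝ (Fin (2*d)) → ℝ) (N : ℕ) :
    rfn d b (N+1) = fun X => rfn d b N X - bdj d N X :=
  funext fun X => by simp [rfn, Finset.sum_range_succ]; ring

lemma contDiffOn_rfn {d : ℕ} {b : EuclideanSpace ℝ (Fin (2*d)) → ℝ}
    (hb : IsAdmissibleSymbol d b) (N : ℕ) :
    ContDiffOn ℝ (⊤:ℕ∞) (rfn d b N) {X | X ≠ 0} := by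
  apply ContDiffOn.sub ((hb.1.of_le (by simp)).contDiffOn)
  exact ContDiffOn.sum fun j _ => (PS_bdj d j).1

lemma E_rec {d : ℕ} {b : EuclideanSpace ℝ (Fin (2*d)) → ℝ} (hb : IsAdmissibleSymbol d b) :
    ∀ N : ℕ, ∀ X : EuclideanSpace ℝ (Fin (2*d)), X ≠ 0 →
      sfun X * rfn d b (N+1) X = (1/4) * lap (rfn d b N) X := by
  intro N
  induction N with
  | zero =>
    intro X hX
    have hb3 : ‖X‖^2 * b X - (1/4) * lap b X = 1 := hb.2.2 X
    have h0 : bdj d 0 X = (sfun X)⁻¹ := by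
      rw [bdj_eq, show cst d 0 = 1 from by norm_num [cst, Nat.doubleFactorial],
        show (-2 - 4*((0:ℕ):ℤ)) = 2*(-1) from by norm_num, ← spow_eq hX (-1), zpow_neg_one,
        one_mul]
    rw [rfn_zero, rfn_succ, rfn_zero]
    show sfun X * (b X - bdj d 0 X) = _
    rw [h0, mul_sub, mul_inv_cancel₀ (sfun_ne hX), sfun_eq]
    linarith
  | succ N ih =>
    intro X hX
    have hlapsplit : lap (rfn d b (N+1)) X = lap (rfn d b N) X - lap (bdj d N) X := by
      rw [rfn_succ]
      exact lap_sub_on (contDiffOn_rfn hb N) (PS_bdj d N).1 hX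
    have hsum : sfun X * rfn d b (N+1+1) X
        = sfun X * rfn d b (N+1) X - sfun X * bdj d (N+1) X := by
      simp only [rfn_succ b (N+1)]
      ring
    rw [hsum, ih X hX, key_lap d N hX, hlapsplit]
    ring

lemma PS_rfn {d : ℕ} {b : EuclideanSpace ℝ (Fin (2*d)) → ℝ} (hb : IsAdmissibleSymbol d b) :
    ∀ N : ℕ, PS (-2 - 4*(N:ℤ)) (rfn d b N) := by
  intro N
  induction N with
  | zero =>
    rw [rfn_zero]
    have h := PS_b hb
    rwa [show ((-2:ℤ) - 4*((0:ℕ):ℤ)) = -2 from by norm_num]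
  | succ N ih =>
    have hsinv : PS (n := 2*d) (-2) (fun X => (sfun X)⁻¹) := by
      have h := PS_spow (n := 2*d) (-1)
      rw [show (2*(-1:ℤ)) = -2 from by norm_num] at h
      exact h.congr fun X hX => by beta_reduce; rw [zpow_neg_one]
    have h1 := (PS_const (n := 2*d) (1/4)).mul (hsinv.mul ih.lap)
    rw [show ((0:ℤ) + (-2 + (-2 - 4*(N:ℤ) - 2))) = -2 - 4*((N+1:ℕ):ℤ) from by push_cast; ring] at h1
    apply h1.congr
    intro X hX
    show (1/4:ℝ) * ((sfun X)⁻¹ * lap (rfn d b N) X) = rfn d b (N+1) X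
    have hE := E_rec hb N X hX
    calc (1/4:ℝ) * ((sfun X)⁻¹ * lap (rfn d b N) X)
        = (sfun X)⁻¹ * ((1/4) * lap (rfn d b N) X) := by ring
      _ = (sfun X)⁻¹ * (sfun X * rfn d b (N+1) X) := by rw [hE]
      _ = rfn d b (N+1) X := inv_mul_cancel_left₀ (sfun_ne hX) _

end Stmt15
theorem stmt15 (d : ℕ) (hd : 1 ≤ d) (b : EuclideanSpace ℝ (Fin (2*d)) → ℝ)
    (hb : IsAdmissibleSymbol d b) :
    ∀ (N : ℕ), 1 ≤ N → ∀ α : Fin (2*d) → ℕ, ∃ C : ℝ,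
      ∀ X : EuclideanSpace ℝ (Fin (2*d)), X ≠ 0 →
        |mderiv α (fun X => b X - ∑ j ∈ Finset.range N, bdj d j X) X|
          ≤ C * ‖X‖ ^ (-2 - 4 * (N : ℤ) - (∑ j, α j : ℤ)) := by
  intro N _ α
  obtain ⟨C, hC0, hC⟩ := (Stmt15.PS_rfn hb N).2 (Stmt15.canonList α)
  refine ⟨C, fun X hX => ?_⟩
  have e1 : mderiv α (fun X => b X - ∑ j ∈ Finset.range N, bdj d j X) X
      = Stmt15.lderiv (Stmt15.canonList α) (Stmt15.rfn d b N) X := by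
    rw [Stmt15.mderiv_eq_lderiv]
    rfl
  rw [e1, show (-2 - 4*(N:ℤ) - (∑ j, (α j:ℤ)))
      = (-2 - 4*(N:ℤ)) - (((Stmt15.canonList α).length : ℕ) : ℤ) from by
    rw [Stmt15.length_canonList]; push_cast; ring]
  exact hC X hX
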